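/- Let p be a 1324-avoiding permutation, encoded as a pair of words (w(p), z(p)) over {A,B,C,D} via the greedy red/blue coloring with types A (red left-to-right minimum of the red subsequence), B (other red), C (blue non-right-to-left-maximum of the blue subsequence), D (blue right-to-left maximum of the blue subsequence), modified so that every right-to-left maximum of p that is not a left-to-right minimum of p is colored blue and marked D. Then for every i and every k ≥ 1: if the i-th letter A from the right in w(p) is immediately preceded by a C and immediately followed by k consecutive letters B, then the i-th segment from the left in z(p) contains at least k letters B. -/

import Mathlib

open Classical

def Avoids1324 {n : ℕ} (p : Equiv.Perm (Fin n)) : Prop :=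
  ¬ ∃ i j k l : Fin n, i < j ∧ j < k ∧ k < l ∧
    p i < p k ∧ p k < p j ∧ p j < p l

/-- The fixpoint characterization of the greedy red/blue coloring (rules (I)/(II)). -/
def GreedyColoring {n : ℕ} (p : Equiv.Perm (Fin n)) (blue0 : Fin n → Prop) : Prop :=
  ∀ i : Fin n, blue0 i ↔
    ∃ a b : Fin n, a < b ∧ b < i ∧ ¬ blue0 a ∧ ¬ blue0 b ∧ p a < p i ∧ p i < p b

def IsLtrMin {n : ℕ} (p : Equiv.Perm (Fin n)) (i : Fin n) : Prop :=
  ∀ j : Fin n, j < i → p i < p j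

def IsRtlMax {n : ℕ} (p : Equiv.Perm (Fin n)) (i : Fin n) : Prop :=
  ∀ j : Fin n, i < j → p j < p i

/-- The modified coloring: rule (4') additionally colors blue every right-to-left
maximum of `p` that is not a left-to-right minimum of `p`. -/
def Blue {n : ℕ} (p : Equiv.Perm (Fin n)) (blue0 : Fin n → Prop) (i : Fin n) : Prop :=
  blue0 i ∨ (IsRtlMax p i ∧ ¬ IsLtrMin p i)

/-- The type of the entry at position `i`:
`A = 0` (red left-to-right minimum of the red subsequence), `B = 1` (other red),
`C = 2` (blue non-right-to-left maximum of the blue subsequence), `D = 3`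
(blue right-to-left maximum of the blue subsequence). -/
noncomputable def typeOf {n : ℕ} (p : Equiv.Perm (Fin n)) (blue0 : Fin n → Prop)
    (i : Fin n) : Fin 4 :=
  if Blue p blue0 i then
    (if ∀ j : Fin n, i < j → Blue p blue0 j → p j < p i then 3 else 2)
  else
    (if ∀ j : Fin n, j < i → ¬ Blue p blue0 j → p i < p j then 0 else 1)

/-- `w(p)`: the `i`-th letter is the type of `p_i`. -/
noncomputable def wWord {n : ℕ} (p : Equiv.Perm (Fin n)) (blue0 : Fin n → Prop) :
    List (Fin 4) :=
  List.ofFn fun i => typeOf p blue0 i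

/-- `z(p)`: the `i`-th letter is the type of the entry of value `i`. -/
noncomputable def zWord {n : ℕ} (p : Equiv.Perm (Fin n)) (blue0 : Fin n → Prop) :
    List (Fin 4) :=
  List.ofFn fun i => typeOf p blue0 (p.symm i)

/-- The (increasing) list of positions of the letter `A` in a word. -/
def Apos (w : List (Fin 4)) : List ℕ :=
  (List.range w.length).filter (fun j => w[j]? = some (0 : Fin 4))


/-!
Let the `i`-th `A` from the right of `w(p)` sit at position `P`, preceded by a `C` and followed
by `B`s at `P + 1, …, P + k`. The red left-to-right minima decrease, so the `A`s of `w(p)` to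
the right of `P` are exactly the `A`-values of `z(p)` below `p P`; hence `p P` opens the `i`-th
segment of `z(p)`. Each `B` at `Q` in the run lies above `p P`, since the red entry below it to
its left is `P` or an earlier `B` of the run. It also lies below every larger `A`-value `p q`:
such a `q` is left of the `C`, and `p q < p Q` yields a 1324-pattern, either `a b C Q` with the
red pair `a, b` that made the `C` blue (if `p C < p Q`; `Q` red forces `p b < p Q`), or
`q C Q d` with a blue `d` right of and above the `C` (if `p Q < p C`; `d` is beyond the red
run). So the `k` values `p Q` are `B`s of the `i`-th segment of `z(p)`.
-/

open Finset

theorem List.Pairwise.getElem?_eq_some_iff_countP {α : Type*} {r : α → α → Prop}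
    [DecidableRel r] [Std.Asymm r] {l : List α} (hl : l.Pairwise r) {i : ℕ} {a : α} :
    l[i]? = some a ↔ a ∈ l ∧ l.countP (fun b => r b a) = i := by
  induction l generalizing i with
  | nil => simp
  | cons x t ih =>
    obtain ⟨hx, ht⟩ := List.pairwise_cons.1 hl
    have hx0 : (x :: t).countP (fun b => r b x) = 0 := by
      refine List.countP_eq_zero.2 fun b hb hbx => ?_
      rcases List.mem_cons.1 hb with rfl | hb
      · exact Std.Asymm.asymm _ _ (of_decide_eq_true hbx) (of_decide_eq_true hbx)
      · exact Std.Asymm.asymm _ _ (hx b hb) (of_decide_eq_true hbx)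
    have hxa : ∀ a ∈ t, (x :: t).countP (fun b => r b a) = t.countP (fun b => r b a) + 1 :=
      fun a ha => by simp [hx a ha]
    cases i with
    | zero =>
      simp only [List.getElem?_cons_zero, Option.some.injEq]
      constructor
      · rintro rfl
        exact ⟨List.mem_cons_self, hx0⟩
      · rintro ⟨ha, h⟩
        rcases List.mem_cons.1 ha with rfl | ha
        · rfl
        · simp [hxa a ha] at h
    | succ i =>
      rw [List.getElem?_cons_succ, ih ht]
      constructor
      · rintro ⟨ha, rfl⟩
        exact ⟨List.mem_cons_of_mem x ha, hxa a ha⟩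
      · rintro ⟨ha, h⟩
        rcases List.mem_cons.1 ha with rfl | ha
        · simp [hx0] at h
        · exact ⟨ha, by simpa [hxa a ha] using h⟩

theorem mem_Apos_iff {w : List (Fin 4)} {j : ℕ} : j ∈ Apos w ↔ w[j]? = some 0 := by
  simp only [Apos, List.mem_filter, List.mem_range, decide_eq_true_eq, and_iff_right_iff_imp]
  intro h
  exact (List.getElem?_eq_some_iff.1 h).1

theorem pairwise_lt_Apos (w : List (Fin 4)) : (Apos w).Pairwise (· < ·) :=
  List.pairwise_lt_range.filter _

theorem getElem?_Apos_eq_some_iff {w : List (Fin 4)} {i a : ℕ} :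
    (Apos w)[i]? = some a ↔ w[a]? = some 0 ∧ (Apos w).countP (· < a) = i := by
  rw [(pairwise_lt_Apos w).getElem?_eq_some_iff_countP, mem_Apos_iff]

theorem getElem?_reverse_Apos_eq_some_iff {w : List (Fin 4)} {i a : ℕ} :
    (Apos w).reverse[i]? = some a ↔ w[a]? = some 0 ∧ (Apos w).countP (a < ·) = i := by
  rw [(List.pairwise_reverse.2 (pairwise_lt_Apos w)).getElem?_eq_some_iff_countP,
    List.mem_reverse, mem_Apos_iff, List.countP_reverse]

theorem lt_of_getElem?_Apos {w : List (Fin 4)} {i j a b : ℕ} (hij : i < j)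
    (ha : (Apos w)[i]? = some a) (hb : (Apos w)[j]? = some b) : a < b := by
  obtain ⟨hi, rfl⟩ := List.getElem?_eq_some_iff.1 ha
  obtain ⟨hj, rfl⟩ := List.getElem?_eq_some_iff.1 hb
  exact List.pairwise_iff_getElem.1 (pairwise_lt_Apos w) i j hi hj hij

instance finite_getElem?_eq_some {α : Type*} (l : List α) (c : α) (R : ℕ → Prop) :
    Finite {j : ℕ // l[j]? = some c ∧ R j} :=
  Finite.of_injective (fun j => (⟨j.1, (List.getElem?_eq_some_iff.1 j.2.1).1⟩ : Fin l.length))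
    fun _ _ h => Subtype.ext (congrArg Fin.val h)

theorem countP_Apos_ofFn {n : ℕ} (f : Fin n → Fin 4) (q : ℕ → Prop) [DecidablePred q] :
    (Apos (List.ofFn f)).countP (fun b => q b) = #{r | f r = 0 ∧ q r} := by
  rw [Fin.univ_def, card_def, filter_val]
  simp only [Multiset.filter_coe, Multiset.coe_card, Apos, List.length_ofFn,
    ← List.map_coe_finRange_eq_range, List.filter_map, List.countP_eq_length_filter,
    List.filter_filter, List.length_map]
  congr 1
  apply List.filter_congr
  intro r _
  simp [List.getElem?_ofFn, Bool.and_comm]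

section Coloring

variable {n : ℕ} (p : Equiv.Perm (Fin n)) (blue0 : Fin n → Prop)

theorem typeOf_eq_zero_iff {i : Fin n} : typeOf p blue0 i = 0 ↔
    ¬ Blue p blue0 i ∧ ∀ j < i, ¬ Blue p blue0 j → p i < p j := by
  unfold typeOf; split_ifs <;> simp_all

theorem typeOf_eq_one_iff {i : Fin n} : typeOf p blue0 i = 1 ↔
    ¬ Blue p blue0 i ∧ ∃ j < i, ¬ Blue p blue0 j ∧ p j < p i := by
  have key : (∃ j < i, ¬ Blue p blue0 j ∧ p j < p i) ↔
      ¬ ∀ j < i, ¬ Blue p blue0 j → p i < p j := by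
    push Not
    refine exists_congr fun j => and_congr_right fun hj => and_congr_right fun _ => ?_
    exact ⟨le_of_lt, fun h => h.lt_of_ne (p.injective.ne hj.ne)⟩
  rw [key]; unfold typeOf; split_ifs <;> simp_all

theorem typeOf_eq_two_iff {i : Fin n} : typeOf p blue0 i = 2 ↔
    Blue p blue0 i ∧ ∃ j, i < j ∧ Blue p blue0 j ∧ p i < p j := by
  have key : (∃ j, i < j ∧ Blue p blue0 j ∧ p i < p j) ↔
      ¬ ∀ j, i < j → Blue p blue0 j → p j < p i := by
    push Not
    refine exists_congr fun j => and_congr_right fun hj => and_congr_right fun _ => ?_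
    exact ⟨le_of_lt, fun h => h.lt_of_ne (p.injective.ne hj.ne)⟩
  rw [key]; unfold typeOf; split_ifs <;> simp_all

theorem wWord_getElem?_eq_some_iff {j : ℕ} {c : Fin 4} :
    (wWord p blue0)[j]? = some c ↔ ∃ h : j < n, typeOf p blue0 ⟨j, h⟩ = c := by
  simp [wWord, List.getElem?_ofFn]

theorem zWord_getElem?_eq_some_iff {j : ℕ} {c : Fin 4} :
    (zWord p blue0)[j]? = some c ↔ ∃ h : j < n, typeOf p blue0 (p.symm ⟨j, h⟩) = c := by
  simp [zWord, List.getElem?_ofFn]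

theorem not_blue_of_typeOf_eq_zero {i : Fin n} (h : typeOf p blue0 i = 0) :
    ¬ Blue p blue0 i :=
  ((typeOf_eq_zero_iff p blue0).1 h).1

theorem not_blue_of_typeOf_eq_one {i : Fin n} (h : typeOf p blue0 i = 1) :
    ¬ Blue p blue0 i :=
  ((typeOf_eq_one_iff p blue0).1 h).1

theorem apply_lt_apply_of_typeOf_eq_zero {P R : Fin n} (hP : ¬ Blue p blue0 P)
    (hR : typeOf p blue0 R = 0) (hPR : P < R) : p R < p P :=
  ((typeOf_eq_zero_iff p blue0).1 hR).2 P hPR hP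

theorem lt_iff_apply_lt_of_typeOf_eq_zero {P R : Fin n} (hP : typeOf p blue0 P = 0)
    (hR : typeOf p blue0 R = 0) : P < R ↔ p R < p P := by
  refine ⟨apply_lt_apply_of_typeOf_eq_zero p blue0 (not_blue_of_typeOf_eq_zero p blue0 hP) hR,
    fun h => lt_of_not_ge fun hRP => ?_⟩
  rcases hRP.lt_or_eq with hRP | rfl
  · exact (apply_lt_apply_of_typeOf_eq_zero p blue0
      (not_blue_of_typeOf_eq_zero p blue0 hR) hP hRP).asymm h
  · exact h.false

theorem card_typeOf_symm_eq_zero_lt {P : Fin n} (hP : typeOf p blue0 P = 0) :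
    #{v | typeOf p blue0 (p.symm v) = 0 ∧ v < p P} = #{r | typeOf p blue0 r = 0 ∧ P < r} := by
  refine card_nbij' p.symm p (fun v hv => ?_) (fun r hr => ?_) (fun v _ => by simp)
    (fun r _ => by simp)
  · simp only [coe_filter, mem_univ, true_and, Set.mem_ofPred_eq] at hv ⊢
    refine ⟨hv.1, (lt_iff_apply_lt_of_typeOf_eq_zero p blue0 hP hv.1).2 ?_⟩
    simpa using hv.2
  · simp only [coe_filter, mem_univ, true_and, Set.mem_ofPred_eq] at hr ⊢
    simpa using ⟨hr.1, (lt_iff_apply_lt_of_typeOf_eq_zero p blue0 hP hr.1).1 hr.2⟩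

theorem getElem?_Apos_zWord_of_getElem?_reverse_Apos_wWord {i pos : ℕ}
    (h : (Apos (wWord p blue0)).reverse[i]? = some pos) :
    ∃ hpos : pos < n, (Apos (zWord p blue0))[i]? = some (p ⟨pos, hpos⟩) := by
  obtain ⟨hA, hcount⟩ := getElem?_reverse_Apos_eq_some_iff.1 h
  obtain ⟨hpos, hPA⟩ := (wWord_getElem?_eq_some_iff p blue0).1 hA
  refine ⟨hpos, getElem?_Apos_eq_some_iff.2 ⟨?_, ?_⟩⟩
  · exact (zWord_getElem?_eq_some_iff p blue0).2 ⟨(p _).isLt, by simpa using hPA⟩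
  · rw [zWord, countP_Apos_ofFn, ← hcount, wWord, countP_Apos_ofFn]
    convert card_typeOf_symm_eq_zero_lt p blue0 hPA using 2 <;> ext <;> simp
    exact fun _ => Iff.rfl

theorem apply_lt_apply_of_forall_typeOf_eq_one {P Q : Fin n} (hP : typeOf p blue0 P = 0)
    (hPQ : P < Q) (hrun : ∀ r, P < r → r ≤ Q → typeOf p blue0 r = 1) : p P < p Q := by
  induction Q using WellFoundedLT.induction with
  | _ Q ih =>
  obtain ⟨-, j, hjQ, hj, hpj⟩ := (typeOf_eq_one_iff p blue0).1 (hrun Q hPQ le_rfl)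
  rcases lt_trichotomy j P with hjP | rfl | hPj
  · exact (apply_lt_apply_of_typeOf_eq_zero p blue0 hj hP hjP).trans hpj
  · exact hpj
  · exact (ih j hjQ hPj fun r h1 h2 => hrun r h1 (h2.trans hjQ.le)).trans hpj

theorem apply_lt_apply_of_forall_typeOf_eq_one_of_typeOf_eq_two (hp : Avoids1324 p)
    (hgreedy : GreedyColoring p blue0) {C P Q q : Fin n} (hC : typeOf p blue0 C = 2)
    (hCP : (C : ℕ) + 1 = P) (hP : typeOf p blue0 P = 0) (hPQ : P < Q)
    (hrun : ∀ r, P < r → r ≤ Q → typeOf p blue0 r = 1) (hq : typeOf p blue0 q = 0)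
    (hPq : p P < p q) : p Q < p q := by
  have hred : ∀ r, P ≤ r → r ≤ Q → ¬ Blue p blue0 r := fun r hPr hrQ => by
    rcases hPr.lt_or_eq with hPr | rfl
    · exact not_blue_of_typeOf_eq_one p blue0 (hrun r hPr hrQ)
    · exact not_blue_of_typeOf_eq_zero p blue0 hP
  obtain ⟨hCblue, d, hCd, hd, hpCd⟩ := (typeOf_eq_two_iff p blue0).1 hC
  have hC0 : blue0 C := hCblue.resolve_right fun h => (h.1 d hCd).asymm hpCd
  obtain ⟨a, b, hab, hbC, ha, hb, hpa, hpb⟩ := (hgreedy C).1 hC0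
  have hqP : q < P := (lt_iff_apply_lt_of_typeOf_eq_zero p blue0 hq hP).2 hPq
  have hqC : q < C := by
    have hqC : q ≠ C := by rintro rfl; simp [hq] at hC
    rw [Fin.lt_def] at hqP ⊢
    have := Fin.val_ne_of_ne hqC
    omega
  have hCQ : C < Q := by rw [Fin.lt_def] at hPQ ⊢; omega
  by_contra! hQq
  have hqQ : p q < p Q := hQq.lt_of_ne (p.injective.ne (hqC.trans hCQ).ne)
  rcases lt_or_gt_of_ne (p.injective.ne hCQ.ne) with hCQ' | hQC'
  · have hbQ : p b < p Q := by
      by_contra! hQb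
      refine hred Q hPQ.le le_rfl (Or.inl ((hgreedy Q).2 ⟨a, b, hab, hbC.trans hCQ, ha, hb,
        hpa.trans hCQ', hQb.lt_of_ne (p.injective.ne (hbC.trans hCQ).ne')⟩))
    exact hp ⟨a, b, C, Q, hab, hbC, hCQ, hpa, hpb, hbQ⟩
  · have hQd : Q < d := lt_of_not_ge fun hdQ =>
      hred d (by rw [Fin.lt_def] at hCd; rw [Fin.le_def]; omega) hdQ hd
    exact hp ⟨q, C, Q, d, hqC, hCQ, hQd, hqQ, hQC', hpCd⟩

end Coloring

/-- If the `i`-th letter `A` from the right of `w(p)` is immediately preceded by a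
`C` and immediately followed by `k` consecutive letters `B`, then the `i`-th segment
from the left of `z(p)` contains at least `k` letters `B`. -/
theorem cab_pow_k_condition {n : ℕ} (p : Equiv.Perm (Fin n))
    (blue0 : Fin n → Prop) (hp : Avoids1324 p) (hb : GreedyColoring p blue0) :
    ∀ i k pos : ℕ, 1 ≤ k →
      (Apos (wWord p blue0)).reverse[i]? = some pos →
      1 ≤ pos →
      (wWord p blue0)[pos - 1]? = some (2 : Fin 4) →
      (∀ j : ℕ, 1 ≤ j → j ≤ k →
        (wWord p blue0)[pos + j]? = some (1 : Fin 4)) →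
      k ≤ Nat.card {j : ℕ //
        (zWord p blue0)[j]? = some (1 : Fin 4) ∧
        (∃ a, (Apos (zWord p blue0))[i]? = some a ∧ a < j) ∧
        (∀ b, (Apos (zWord p blue0))[i + 1]? = some b → j < b)} := by
  intro i k pos hk hrev hpos hCw hBw
  obtain ⟨hposn, hseg⟩ := getElem?_Apos_zWord_of_getElem?_reverse_Apos_wWord p blue0 hrev
  obtain ⟨_, hP⟩ := (wWord_getElem?_eq_some_iff p blue0).1
    (getElem?_reverse_Apos_eq_some_iff.1 hrev).1
  obtain ⟨_, hC⟩ := (wWord_getElem?_eq_some_iff p blue0).1 hCw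
  have hB (t : ℕ) (h1 : 1 ≤ t) (h2 : t ≤ k) :
      ∃ h : pos + t < n, typeOf p blue0 ⟨pos + t, h⟩ = 1 :=
    (wWord_getElem?_eq_some_iff p blue0).1 (hBw t h1 h2)
  have hn : pos + k < n := (hB k hk le_rfl).1
  let Q (t : Fin k) : Fin n := ⟨pos + (t + 1), by omega⟩
  have hPQ (t : Fin k) : (⟨pos, hposn⟩ : Fin n) < Q t := by simp [Fin.lt_def, Q]
  have hrun (t : Fin k) (r : Fin n) (hPr : ⟨pos, hposn⟩ < r) (hrQ : r ≤ Q t) :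
      typeOf p blue0 r = 1 := by
    simp only [Fin.lt_def, Fin.le_def, Q] at hPr hrQ
    obtain ⟨_, h⟩ := hB (r - pos) (by omega) (by omega)
    simpa [Nat.add_sub_cancel' hPr.le] using h
  refine le_trans (by simp) (Nat.card_le_card_of_injective (α := Fin k) (fun t => ⟨p (Q t), ?_,
    ⟨_, hseg, apply_lt_apply_of_forall_typeOf_eq_one p blue0 hP (hPQ t) (hrun t)⟩,
    fun b hb' => ?_⟩) ?_)
  · exact (zWord_getElem?_eq_some_iff p blue0).2
      ⟨(p _).isLt, by simpa using hrun t (Q t) (hPQ t) le_rfl⟩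
  · obtain ⟨hbA, -⟩ := getElem?_Apos_eq_some_iff.1 hb'
    obtain ⟨hbn, hqA⟩ := (zWord_getElem?_eq_some_iff p blue0).1 hbA
    have hPb := lt_of_getElem?_Apos (lt_add_one i) hseg hb'
    have := apply_lt_apply_of_forall_typeOf_eq_one_of_typeOf_eq_two p blue0 hp hb hC
      (Nat.sub_add_cancel hpos) hP (hPQ t) (hrun t) hqA (by simpa [Fin.lt_def] using hPb)
    simpa [Fin.lt_def] using this
  · intro s t hst
    have := congrArg Fin.val (p.injective (Fin.val_injective (congrArg Subtype.val hst)))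
    simp only [Q] at this
    omega
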